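/- arXiv:2302.07235 — 5 statements merged into one kernel-verified Lean document; each statement's English description precedes it below -/
import Mathlib

section
/- If a binary string T of length n contains exactly s occurrences of the symbol 1, then the number of factors z in the greedy LZ77 factorization of T satisfies z ≤ 3s + 2. -/
/-- `S` occurs in `T` starting at (0-indexed) position `i`. -/
def OccursAt {α : Type*} (T S : List α) (i : ℕ) : Prop :=
  i + S.length ≤ T.length ∧ (T.drop i).take S.length = S

/-- `S` has an occurrence in `T` starting strictly before position `p`
(the occurrence may overlap position `p`). -/
def OccursBefore {α : Type*} (T S : List α) (p : ℕ) : Prop :=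
  ∃ i, i < p ∧ OccursAt T S i

/-- `F` is the greedy LZ77 factor of `T` starting at position `p`:
either the leftmost occurrence of a single symbol, or the longest substring
starting at `p` that occurs starting at an earlier position. -/
def LZ77Factor {α : Type*} (T : List α) (p : ℕ) (F : List α) : Prop :=
  F ≠ [] ∧ OccursAt T F p ∧
    ((∃ a, F = [a] ∧ a ∉ T.take p) ∨
      (OccursBefore T F p ∧
        ∀ F', OccursAt T F' p → OccursBefore T F' p → F'.length ≤ F.length))

/-- `fs` is the greedy LZ77 factorization of `T`. -/
def IsLZ77 {α : Type*} (T : List α) (fs : List (List α)) : Prop :=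
  fs.flatten = T ∧
    ∀ k (hk : k < fs.length),
      LZ77Factor T (((fs.take k).map List.length).sum) (fs.get ⟨k, hk⟩)

/-!
Let `c p = onesBefore T p` be the number of ones before position `p`. A factor start `p` either
sits on a one, or starts a run of zeros, or lies strictly inside one. On starts of each kind `c`
is injective: for the first two kinds because two starts of the same kind with equal `c` would
be separated by zeros only; for the third because a factor starting inside a zero run extends to
its end, the run shifted one position to the left being an earlier occurrence, so no later start
lies in the same run. This gives at most `s`, `s + 1` and `s + 1` factors of the three kinds.
-/

section Occurrences

variable {α : Type*} {T S : List α} {i : ℕ}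

theorem occursAt_iff_getElem? :
    OccursAt T S i ↔ i + S.length ≤ T.length ∧ ∀ j < S.length, T[i + j]? = S[j]? := by
  refine and_congr_right fun _ => ⟨fun h j hj => ?_, fun h => List.ext_getElem? fun j => ?_⟩
  · rw [← h, List.getElem?_take_of_lt hj, List.getElem?_drop]
  · rw [List.getElem?_take, List.getElem?_drop]
    split_ifs with hj
    · exact h j hj
    · exact (List.getElem?_eq_none (not_lt.1 hj)).symm

theorem OccursAt.getElem? (h : OccursAt T S i) {j : ℕ} (hj : j < S.length) :
    T[i + j]? = S[j]? :=
  (occursAt_iff_getElem?.1 h).2 j hj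

theorem OccursAt.take (h : OccursAt T S i) (k : ℕ) : OccursAt T (S.take k) i := by
  refine occursAt_iff_getElem?.2 ⟨?_, fun j hj => ?_⟩
  · have := h.1
    grind
  · simp only [List.length_take, lt_min_iff] at hj
    rw [List.getElem?_take_of_lt hj.1, h.getElem? hj.2]

theorem OccursAt.drop (h : OccursAt T S i) {k : ℕ} (hk : k ≤ S.length) :
    OccursAt T (S.drop k) (i + k) := by
  refine occursAt_iff_getElem?.2 ⟨?_, fun j hj => ?_⟩
  · have := h.1
    grind
  · rw [List.length_drop] at hj
    rw [List.getElem?_drop, add_assoc, h.getElem? (by omega)]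

theorem occursAt_replicate {a : α} {m : ℕ} (hm : 0 < m) (h : ∀ j < m, T[i + j]? = some a) :
    OccursAt T (List.replicate m a) i := by
  refine occursAt_iff_getElem?.2 ⟨?_, fun j hj => ?_⟩
  · have := h (m - 1) (by omega)
    rw [List.length_replicate]
    have := (List.getElem?_eq_some_iff.1 this).1
    omega
  · rw [List.length_replicate] at hj
    rw [h j hj, List.getElem?_replicate, if_pos hj]

end Occurrences

theorem LZ77Factor.le_length_of_replicate {α : Type*} {T F : List α} {p m : ℕ} {a : α}
    (hF : LZ77Factor T p F) (hp : 0 < p)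
    (hrun : OccursAt T (List.replicate (m + 1) a) (p - 1)) : m ≤ F.length := by
  obtain ⟨-, hocc, ⟨b, rfl, hb⟩ | ⟨-, hmax⟩⟩ := hF
  · rcases Nat.eq_zero_or_pos m with rfl | hm
    · exact Nat.zero_le _
    have hpa : T[p]? = some a := by
      simpa [Nat.sub_add_cancel hp, hm] using hrun.getElem? (j := 1) (by simp; omega)
    have hpb : T[p]? = some b := by simpa using hocc.getElem? (j := 0) (by simp)
    have hprev : T[p - 1]? = some a := by simpa using hrun.getElem? (j := 0) (by simp)
    obtain rfl : b = a := Option.some_injective _ (hpb.symm.trans hpa)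
    have hmem : b ∈ T.take p :=
      List.mem_iff_getElem?.2 ⟨p - 1, by rwa [List.getElem?_take_of_lt (by omega)]⟩
    exact (hb hmem).elim
  · have hlater : OccursAt T (List.replicate m a) p := by
      simpa [Nat.sub_add_cancel hp] using hrun.drop (k := 1) (by simp)
    have hearlier : OccursBefore T (List.replicate m a) p :=
      ⟨p - 1, by omega, by simpa using hrun.take m⟩
    simpa using hmax _ hlater hearlier

theorem Finset.card_le_of_lt_of_ne {α : Type*} [LinearOrder α] {S : Finset α} {f : α → ℕ}
    {k : ℕ} (hlt : ∀ p ∈ S, f p < k) (hne : ∀ p ∈ S, ∀ q ∈ S, p < q → f p ≠ f q) :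
    S.card ≤ k := by
  simpa using Finset.card_le_card_of_injOn f (t := Finset.range k)
    (fun p hp => Finset.mem_range.2 (hlt p hp)) fun p hp q hq hpq => by
      by_contra h
      rcases lt_or_gt_of_ne h with h | h
      exacts [hne p hp q hq h hpq, hne q hq p hp h hpq.symm]

namespace LZ77

def onesBefore (T : List Bool) (p : ℕ) : ℕ := (T.take p).count true

section OnesBefore

variable {T : List Bool}

theorem onesBefore_succ (j : ℕ) :
    onesBefore T (j + 1) = onesBefore T j + if T[j]? = some true then 1 else 0 := by
  unfold onesBefore
  rw [List.take_add_one, List.count_append]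
  rcases T[j]? with _ | _ | _ <;> simp

theorem onesBefore_mono : Monotone (onesBefore T) :=
  monotone_nat_of_le_succ fun j => by rw [onesBefore_succ]; omega

theorem onesBefore_le_count (p : ℕ) : onesBefore T p ≤ T.count true :=
  (List.take_sublist p T).count_le true

theorem getElem?_eq_some_false_of_onesBefore_eq {p q j : ℕ} (hpj : p ≤ j) (hjq : j < q)
    (hq : q ≤ T.length) (h : onesBefore T p = onesBefore T q) : T[j]? = some false := by
  have hstep : onesBefore T (j + 1) = onesBefore T j :=
    le_antisymm (calc
      onesBefore T (j + 1) ≤ onesBefore T q := onesBefore_mono (by omega)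
      _ = onesBefore T p := h.symm
      _ ≤ onesBefore T j := onesBefore_mono hpj) (onesBefore_mono (by omega))
  rw [onesBefore_succ] at hstep
  rw [List.getElem?_eq_getElem (by omega)] at hstep ⊢
  cases hb : T[j] <;> simp [hb] at hstep ⊢

end OnesBefore

section Counting

variable (T : List Bool) (S : Finset ℕ)

theorem card_filter_true_le : (S.filter fun p => T[p]? = some true).card ≤ T.count true := by
  have hsucc : ∀ p, T[p]? = some true → onesBefore T (p + 1) = onesBefore T p + 1 :=
    fun p hp => by simp [onesBefore_succ, hp]
  refine Finset.card_le_of_lt_of_ne (f := onesBefore T) (fun p hp => ?_) fun p hp q _ hpq => ?_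
  · have := onesBefore_le_count (T := T) (p + 1)
    rw [hsucc p (Finset.mem_filter.1 hp).2] at this
    omega
  · have := onesBefore_mono (T := T) (Nat.succ_le_of_lt hpq)
    rw [hsucc p (Finset.mem_filter.1 hp).2] at this
    omega

theorem card_filter_zeroRunStart_le :
    (S.filter fun p => T[p]? = some false ∧ (p = 0 ∨ T[p - 1]? = some true)).card ≤
      T.count true + 1 := by
  refine Finset.card_le_of_lt_of_ne (f := onesBefore T)
    (fun p _ => Nat.lt_succ_of_le (onesBefore_le_count p)) fun p _ q hq hpq heq => ?_
  obtain ⟨hqfalse, hq0 | hqprev⟩ := (Finset.mem_filter.1 hq).2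
  · omega
  · have hq : q < T.length := (List.getElem?_eq_some_iff.1 hqfalse).1
    rw [getElem?_eq_some_false_of_onesBefore_eq (by omega) (by omega) hq.le heq] at hqprev
    simp at hqprev

theorem card_filter_zeroRunInterior_le
    (hfac : ∀ p ∈ S, ∃ F, LZ77Factor T p F ∧ ∀ q ∈ S, p < q → p + F.length ≤ q) :
    (S.filter fun p => 0 < p ∧ T[p - 1]? = some false ∧ T[p]? = some false).card ≤
      T.count true + 1 := by
  refine Finset.card_le_of_lt_of_ne (f := onesBefore T)
    (fun p _ => Nat.lt_succ_of_le (onesBefore_le_count p)) fun p hp q hq hpq heq => ?_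
  obtain ⟨hpS, hp0, hpprev, -⟩ := Finset.mem_filter.1 hp
  obtain ⟨hqS, -, -, hqfalse⟩ := Finset.mem_filter.1 hq
  have hqlen : q < T.length := (List.getElem?_eq_some_iff.1 hqfalse).1
  -- positions `p - 1, …, q` are all zeros, so the factor at `p` runs past `q`
  have hrun : OccursAt T (List.replicate (q - p + 1 + 1) false) (p - 1) := by
    refine occursAt_replicate (by omega) fun j hj => ?_
    rcases Nat.eq_zero_or_pos j with rfl | hj0
    · simpa using hpprev
    rcases eq_or_lt_of_le (Nat.le_of_lt_succ hj) with rfl | hjq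
    · rwa [show p - 1 + (q - p + 1) = q by omega]
    · exact getElem?_eq_some_false_of_onesBefore_eq (by omega) (by omega) hqlen.le heq
  obtain ⟨F, hF, hgap⟩ := hfac p hpS
  have := hF.le_length_of_replicate hp0 hrun
  have := hgap q hqS hpq
  omega

theorem card_le_of_lz77Factor (hS : ∀ p ∈ S, p < T.length)
    (hfac : ∀ p ∈ S, ∃ F, LZ77Factor T p F ∧ ∀ q ∈ S, p < q → p + F.length ≤ q) :
    S.card ≤ 3 * T.count true + 2 := by
  have hcover : S ⊆ S.filter (fun p => T[p]? = some true) ∪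
      S.filter (fun p => T[p]? = some false ∧ (p = 0 ∨ T[p - 1]? = some true)) ∪
      S.filter (fun p => 0 < p ∧ T[p - 1]? = some false ∧ T[p]? = some false) := by
    intro p hp
    have hp' := hS p hp
    simp only [Finset.mem_union, Finset.mem_filter, hp, true_and]
    rw [List.getElem?_eq_getElem hp']
    rcases Nat.eq_zero_or_pos p with rfl | hp0
    · cases T[0] <;> simp
    rw [List.getElem?_eq_getElem (by omega : p - 1 < T.length)]
    cases T[p] <;> cases T[p - 1] <;> simp [hp0]
  calc S.card ≤ _ := Finset.card_le_card hcover
    _ ≤ _ := Finset.card_union_le _ _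
    _ ≤ _ := add_le_add_left (Finset.card_union_le _ _) _
    _ ≤ T.count true + (T.count true + 1) + (T.count true + 1) :=
      add_le_add (add_le_add (card_filter_true_le T S) (card_filter_zeroRunStart_le T S))
        (card_filter_zeroRunInterior_le T S hfac)
    _ = 3 * T.count true + 2 := by ring

end Counting

section FactorStart

variable {α : Type*} {T : List α} {fs : List (List α)}

def factorStart (fs : List (List α)) (k : ℕ) : ℕ := ((fs.take k).map List.length).sum

theorem factorStart_succ {k : ℕ} (hk : k < fs.length) :
    factorStart fs (k + 1) = factorStart fs k + fs[k].length := by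
  rw [factorStart, factorStart, List.take_add_one, List.getElem?_eq_getElem hk, List.map_append,
    List.sum_append]
  simp

theorem factorStart_mono : Monotone (factorStart fs) :=
  monotone_nat_of_le_succ fun k => by
    rcases lt_or_ge k fs.length with hk | hk
    · rw [factorStart_succ hk]
      exact Nat.le_add_right _ _
    · simp [factorStart, List.take_of_length_le hk, List.take_of_length_le (Nat.le_succ_of_le hk)]

theorem factorStart_length : factorStart fs fs.length = fs.flatten.length := by
  rw [factorStart, List.take_length, List.length_flatten]

theorem factorStart_add_length_le {k j : ℕ} (hk : k < fs.length) (hkj : k < j) :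
    factorStart fs k + fs[k].length ≤ factorStart fs j :=
  factorStart_succ hk ▸ factorStart_mono hkj

theorem IsLZ77.factorStart_strictMonoOn (h : IsLZ77 T fs) :
    StrictMonoOn (factorStart fs) (Set.Iic fs.length) := fun k _ j hj hkj => by
  have hk : k < fs.length := lt_of_lt_of_le hkj hj
  have := factorStart_add_length_le hk hkj
  have hne : fs[k] ≠ [] := (h.2 k hk).1
  have := List.length_pos_iff.2 hne
  omega

end FactorStart

end LZ77

open LZ77 in
/-- If a binary string `T` contains exactly `s` ones, then its greedy LZ77
factorization has at most `3 * s + 2` factors. -/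
theorem stmt0 (T : List Bool) (fs : List (List Bool)) (s : ℕ)
    (hs : T.count true = s) (h : IsLZ77 T fs) :
    fs.length ≤ 3 * s + 2 := by
  subst hs
  have hmono := h.factorStart_strictMonoOn
  have hend : factorStart fs fs.length = T.length := by rw [factorStart_length, h.1]
  have hinj : Set.InjOn (factorStart fs) (Finset.range fs.length) :=
    hmono.injOn.mono fun k hk => Set.mem_Iic.2 (Finset.mem_range.1 hk).le
  rw [← Finset.card_range fs.length, ← Finset.card_image_of_injOn hinj]
  refine card_le_of_lz77Factor T _ ?_ ?_
  · simp only [Finset.mem_image, Finset.mem_range]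
    rintro _ ⟨k, hk, rfl⟩
    exact hend ▸ hmono (Set.mem_Iic.2 hk.le) (Set.mem_Iic.2 le_rfl) hk
  · simp only [Finset.mem_image, Finset.mem_range]
    rintro _ ⟨k, hk, rfl⟩
    refine ⟨fs[k], h.2 k hk, ?_⟩
    rintro _ ⟨j, -, rfl⟩ hkj
    exact factorStart_add_length_le hk (factorStart_mono.reflect_lt hkj)
end

section
/- In the LZ-End+τ factorization of T[1..n] with T[n] being a unique sentinel symbol, any subsequence of ⌊log₂ n⌋ + 2 consecutive phrases contains a special phrase, where the j-th phrase (of length ℓ_j) is special if j is the last phrase index or j ≥ 2 and ℓ_j ≥ ⌈ℓ_{j−1}/2⌉. Consequently, if z' denotes the number of special phrases and z_{e+τ} the total number of phrases, then z_{e+τ} ≤ z'(⌊log₂ n⌋ + 2). -/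
/-- In the LZ-End+τ factorization of `T[1..n]` with phrase lengths
`ℓ 1, …, ℓ Z` (each between `1` and `n`), call phrase `j` *special* if `j` is
the last phrase or `j ∈ [2, Z)` and `ℓ j ≥ ⌈ℓ (j-1) / 2⌉`.  Then
(a) every window of `⌊log₂ n⌋ + 2` consecutive phrases contains a special
phrase, and (b) the total number of phrases satisfies
`Z ≤ z' * (⌊log₂ n⌋ + 2)` where `z'` is the number of special phrases. -/
theorem stmt5 (n Z : ℕ) (ℓ : ℕ → ℕ) (hn : 1 ≤ n) (hZ : 1 ≤ Z)
    (hlen : ∀ j, 1 ≤ j → j ≤ Z → 1 ≤ ℓ j ∧ ℓ j ≤ n)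
    (Special : ℕ → Prop)
    (hSpecial : ∀ j, Special j ↔
      (j = Z ∨ (2 ≤ j ∧ j < Z ∧ (ℓ (j - 1) + 1) / 2 ≤ ℓ j))) :
    (∀ j, 1 ≤ j → j + (Nat.log 2 n + 1) ≤ Z →
      ∃ i, j ≤ i ∧ i ≤ j + (Nat.log 2 n + 1) ∧ Special i) ∧
    Z ≤ {j | 1 ≤ j ∧ j ≤ Z ∧ Special j}.ncard * (Nat.log 2 n + 2) := by
  classical
  set L := Nat.log 2 n with hL
  have hSZ : Special Z := (hSpecial Z).2 (Or.inl rfl)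
  -- main claim
  have key : ∀ j, 1 ≤ j → j ≤ Z →
      ∃ i, j ≤ i ∧ i ≤ Z ∧ i ≤ j + (L + 1) ∧ Special i := by
    intro j hj1 hjZ
    by_contra hcon
    push_neg at hcon
    -- Z is special, so Z > j + L + 1
    have hZbig : j + (L + 1) < Z := by
      by_contra h
      push_neg at h
      exact absurd hSZ (hcon Z hjZ le_rfl h)
    -- doubling lemma
    have hdouble : ∀ k, k ≤ L + 1 → 2 ^ k * ℓ (j + k) ≤ ℓ j := by
      intro k hk
      induction k with
      | zero => simp
      | succ k ih =>
        have ihk := ih (Nat.le_of_succ_le hk)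
        set i := j + (k + 1) with hi
        have hiZ : i < Z := by omega
        have hns : ¬ Special i := by
          intro hs
          exact hcon i (by omega) (by omega) (by omega) hs
        rw [hSpecial] at hns
        push_neg at hns
        have h2 : ℓ i < (ℓ (i - 1) + 1) / 2 := hns.2 (by omega) hiZ
        have h3 : ℓ i + 1 ≤ (ℓ (i - 1) + 1) / 2 := h2
        have h4 : (ℓ i + 1) * 2 ≤ ℓ (i - 1) + 1 :=
          (Nat.le_div_iff_mul_le (by norm_num)).1 h3
        have h5 : 2 * ℓ i ≤ ℓ (i - 1) := by omega
        have hieq : i - 1 = j + k := by omega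
        calc 2 ^ (k + 1) * ℓ (j + (k + 1)) = 2 ^ k * (2 * ℓ i) := by
              rw [hi]; ring
          _ ≤ 2 ^ k * ℓ (i - 1) := Nat.mul_le_mul_left _ h5
          _ = 2 ^ k * ℓ (j + k) := by rw [hieq]
          _ ≤ ℓ j := ihk
    have h1 := hdouble (L + 1) le_rfl
    have hlast := hlen (j + (L + 1)) (by omega) (by omega)
    have hljn := (hlen j hj1 hjZ).2
    have hpow : 2 ^ (L + 1) ≤ n := by
      calc 2 ^ (L + 1) = 2 ^ (L + 1) * 1 := by ring
        _ ≤ 2 ^ (L + 1) * ℓ (j + (L + 1)) := Nat.mul_le_mul_left _ hlast.1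
        _ ≤ ℓ j := h1
        _ ≤ n := hljn
    have hlt : n < 2 ^ (L + 1) := Nat.lt_pow_succ_log_self (by norm_num) n
    omega
  constructor
  · intro j hj1 hjZ
    obtain ⟨i, h1, h2, h3, h4⟩ := key j hj1 (by omega)
    exact ⟨i, h1, h3, h4⟩
  · -- counting part
    set Sf : Finset ℕ := (Finset.Icc 1 Z).filter (fun j => Special j) with hSf
    have hset : {j | 1 ≤ j ∧ j ≤ Z ∧ Special j} = ↑Sf := by
      ext x
      simp [hSf, Finset.mem_filter, Finset.mem_Icc, and_assoc]
    rw [hset, Set.ncard_coe_finset]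
    have hsub : Finset.Icc 1 Z ⊆ Sf.biUnion (fun i => Finset.Icc (i - (L + 1)) i) := by
      intro j hj
      rw [Finset.mem_Icc] at hj
      obtain ⟨i, h1, h2, h3, h4⟩ := key j hj.1 hj.2
      rw [Finset.mem_biUnion]
      refine ⟨i, ?_, ?_⟩
      · simp [hSf, Finset.mem_filter, Finset.mem_Icc]
        exact ⟨⟨by omega, h2⟩, h4⟩
      · rw [Finset.mem_Icc]; omega
    calc Z = (Finset.Icc 1 Z).card := by rw [Nat.card_Icc]; omega
      _ ≤ (Sf.biUnion (fun i => Finset.Icc (i - (L + 1)) i)).card :=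
          Finset.card_le_card hsub
      _ ≤ ∑ i ∈ Sf, (Finset.Icc (i - (L + 1)) i).card :=
          Finset.card_biUnion_le
      _ ≤ ∑ _i ∈ Sf, (L + 2) := by
          apply Finset.sum_le_sum
          intro i _
          rw [Nat.card_Icc]
          omega
      _ = Sf.card * (L + 2) := by rw [Finset.sum_const, smul_eq_mul]
end

section
/- For any string T of length n with T[n] = $ a unique sentinel, and any m ≥ 1, the number of distinct length-m substrings of the infinite periodic extension T^∞ is at most m·z, where z is the number of LZ77 factors of T. -/
/-- The length-`m` substring of the infinite periodic extension `T^∞` of `T`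
starting at position `i`, where `T^∞[i] = T[i mod |T|]` (0-indexed). -/
def TinfTake {α : Type*} (T : List α) (hT : T ≠ []) (i m : ℕ) : List α :=
  (List.range m).map fun d =>
    T.get ⟨(i + d) % T.length, Nat.mod_lt _ (List.length_pos_iff.mpr hT)⟩

/-!
Let `p₀ < p₁ < ⋯` be the starting positions of the LZ77 phrases. The leftmost occurrence in `T`
of a nonempty substring contains some `pₖ`: otherwise it lies strictly inside a phrase, which is
then a copy of an earlier source, and the source yields an earlier occurrence. A length-`m` window
of `T^∞` is either a substring of `T`, or it wraps around and contains the last position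
`|T| - 1`; that position is a phrase start because the sentinel occurs nowhere else. So every
window is the one starting `d < m` positions before some `pₖ`, which leaves `m · z` choices.
-/

section

variable {α : Type*}

theorem OccursAt.trans {T F S : List α} {q a : ℕ} (hF : OccursAt T F q) (hS : OccursAt F S a) :
    OccursAt T S (q + a) := by
  obtain ⟨hFlen, hFeq⟩ := hF
  obtain ⟨hSlen, hSeq⟩ := hS
  refine ⟨by omega, ?_⟩
  conv_rhs => rw [← hSeq, ← hFeq]
  rw [List.drop_take, List.take_take, List.drop_drop]
  congr 1
  omega

theorem OccursAt.of_occursAt_add {T F S : List α} {p a : ℕ} (hF : OccursAt T F p)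
    (hS : OccursAt T S (p + a)) (ha : a + S.length ≤ F.length) : OccursAt F S a := by
  obtain ⟨hFlen, hFeq⟩ := hF
  obtain ⟨hSlen, hSeq⟩ := hS
  refine ⟨ha, ?_⟩
  conv_rhs => rw [← hSeq]
  rw [← hFeq, List.drop_take, List.take_take, List.drop_drop]
  congr 1
  omega

theorem OccursAt.getElem_eq {T S : List α} {i : ℕ} (hS : OccursAt T S i) {d : ℕ}
    (hd : d < S.length) : S[d] = T[i + d]'(by have := hS.1; omega) := by
  rw [List.getElem_of_eq hS.2.symm hd, List.getElem_take, List.getElem_drop]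

theorem occursAt_nil (T : List α) : OccursAt T [] 0 := by
  simp [OccursAt]

theorem TinfTake_mod (T : List α) (hT : T ≠ []) (i m : ℕ) :
    TinfTake T hT (i % T.length) m = TinfTake T hT i m := by
  simp [TinfTake, Nat.mod_add_mod]

theorem TinfTake_eq_take_drop (T : List α) (hT : T ≠ []) {i m : ℕ} (h : i + m ≤ T.length) :
    TinfTake T hT i m = (T.drop i).take m := by
  apply List.ext_getElem (by simp [TinfTake]; omega)
  intro d hd _
  simp only [TinfTake, List.length_map, List.length_range] at hd
  simp [TinfTake, Nat.mod_eq_of_lt (show i + d < T.length by omega)]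

theorem OccursAt.TinfTake_eq {T S : List α} (hT : T ≠ []) {i : ℕ} (hS : OccursAt T S i) :
    TinfTake T hT i S.length = S := by
  rw [TinfTake_eq_take_drop T hT hS.1, hS.2]

theorem occursAt_TinfTake (T : List α) (hT : T ≠ []) {i m : ℕ} (h : i + m ≤ T.length) :
    OccursAt T (TinfTake T hT i m) i := by
  rw [TinfTake_eq_take_drop T hT h]
  exact ⟨by simp; omega, by simp⟩

theorem getLast_not_mem_dropLast_of_count_eq_one [DecidableEq α] {T : List α} (hT : T ≠ [])
    (hsent : T.count (T.getLast hT) = 1) : T.getLast hT ∉ T.dropLast := by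
  have hsplit := List.dropLast_append_getLast hT
  generalize T.getLast hT = a at hsent hsplit ⊢
  rw [← hsplit, List.count_append] at hsent
  exact List.count_eq_zero.mp (by simpa using hsent)

def phraseStart (fs : List (List α)) (k : ℕ) : ℕ := ((fs.take k).map List.length).sum

theorem phraseStart_zero (fs : List (List α)) : phraseStart fs 0 = 0 := rfl

theorem phraseStart_succ (fs : List (List α)) {k : ℕ} (hk : k < fs.length) :
    phraseStart fs (k + 1) = phraseStart fs k + fs[k].length := by
  simp only [phraseStart, List.map_take]
  rw [List.sum_take_succ _ _ (by simpa using hk), List.getElem_map]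

theorem phraseStart_length (fs : List (List α)) :
    phraseStart fs fs.length = fs.flatten.length := by
  simp [phraseStart, List.length_flatten]

theorem exists_phraseStart_le_lt_succ (fs : List (List α)) {j : ℕ}
    (hj : j < fs.flatten.length) :
    ∃ k < fs.length, phraseStart fs k ≤ j ∧ j < phraseStart fs (k + 1) := by
  classical
  have hex : ∃ k, j < phraseStart fs k := ⟨fs.length, by rwa [phraseStart_length]⟩
  have hpos : Nat.find hex ≠ 0 := fun h0 => by
    have := Nat.find_spec hex
    rw [h0, phraseStart_zero] at this
    omega
  have hle : Nat.find hex ≤ fs.length := Nat.find_min' hex (by rwa [phraseStart_length])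
  refine ⟨Nat.find hex - 1, by omega, ?_, ?_⟩
  · exact not_lt.mp (Nat.find_min hex (by omega))
  · rw [Nat.sub_add_cancel (Nat.pos_of_ne_zero hpos)]
    exact Nat.find_spec hex

namespace IsLZ77

variable {T : List α} {fs : List (List α)}

theorem occursBefore_of_lt_of_le (h : IsLZ77 T fs) {k j : ℕ} (hk : k < fs.length) {S : List α}
    (hS : OccursAt T S j) (hj : phraseStart fs k < j)
    (hjS : j + S.length ≤ phraseStart fs (k + 1)) : OccursBefore T S j := by
  obtain ⟨-, hF, hsrc⟩ : LZ77Factor T (phraseStart fs k) fs[k] := h.2 k hk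
  rw [phraseStart_succ fs hk] at hjS
  rcases hsrc with ⟨a, ha, -⟩ | ⟨⟨q, hq, hqF⟩, -⟩
  · have hS_nil : S = [] := List.eq_nil_of_length_eq_zero (by simp [ha] at hjS; omega)
    exact ⟨0, by omega, hS_nil ▸ occursAt_nil T⟩
  · have hjk : j = phraseStart fs k + (j - phraseStart fs k) := by omega
    rw [hjk] at hS
    exact ⟨q + (j - phraseStart fs k), by omega,
      hqF.trans (hF.of_occursAt_add hS (by omega))⟩

theorem exists_phraseStart_mem_of_not_occursBefore (h : IsLZ77 T fs) {S : List α} {j : ℕ}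
    (hS : OccursAt T S j) (hleft : ¬OccursBefore T S j) (hne : S ≠ []) :
    ∃ k < fs.length, j ≤ phraseStart fs k ∧ phraseStart fs k < j + S.length := by
  have hSpos := List.length_pos_iff.mpr hne
  have hjT : j < fs.flatten.length := by rw [h.1]; have := hS.1; omega
  obtain ⟨k, hk, hkj, hjk⟩ := exists_phraseStart_le_lt_succ fs hjT
  by_cases hstart : phraseStart fs k = j
  · exact ⟨k, hk, hstart.ge, by omega⟩
  by_cases hcross : phraseStart fs (k + 1) < j + S.length
  · have hk1 : k + 1 < fs.length := by
      by_contra hk1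
      have hlast : k + 1 = fs.length := by omega
      rw [hlast, phraseStart_length, h.1] at hcross
      have := hS.1
      omega
    exact ⟨k + 1, hk1, hjk.le, hcross⟩
  · exact absurd (h.occursBefore_of_lt_of_le hk hS (by omega) (by omega)) hleft

theorem exists_phraseStart_eq_length_sub_one [DecidableEq α] (h : IsLZ77 T fs) (hT : T ≠ [])
    (hsent : T.count (T.getLast hT) = 1) :
    ∃ k < fs.length, phraseStart fs k = T.length - 1 := by
  have hTpos := List.length_pos_iff.mpr hT
  obtain ⟨k, hk, hkj, hjk⟩ :=
    exists_phraseStart_le_lt_succ fs (j := T.length - 1) (by rw [h.1]; omega)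
  refine ⟨k, hk, le_antisymm hkj (not_lt.mp fun hlt => ?_)⟩
  have hlast : OccursAt T [T.getLast hT] (T.length - 1) := by
    refine ⟨by simp; omega, ?_⟩
    rw [List.drop_length_sub_one hT, List.length_singleton, List.take_one, List.head?_cons,
      Option.toList_some]
  obtain ⟨j, hj, hjlast⟩ := h.occursBefore_of_lt_of_le hk hlast hlt (by simp; omega)
  have hjT : j < T.dropLast.length := by simp; omega
  have hTj : T.dropLast[j] = T.getLast hT := by
    rw [List.getElem_dropLast]
    exact (hjlast.getElem_eq (d := 0) (by simp)).symm
  exact getLast_not_mem_dropLast_of_count_eq_one hT hsent (hTj ▸ List.getElem_mem hjT)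

theorem exists_TinfTake_eq_phraseStart_sub [DecidableEq α] (h : IsLZ77 T fs) (hT : T ≠ [])
    (hsent : T.count (T.getLast hT) = 1) {m : ℕ} (hm : 0 < m) (i : ℕ) :
    ∃ k < fs.length, ∃ d < m, d ≤ phraseStart fs k ∧
      TinfTake T hT (phraseStart fs k - d) m = TinfTake T hT i m := by
  rw [← TinfTake_mod]
  have hr : i % T.length < T.length := Nat.mod_lt _ (List.length_pos_iff.mpr hT)
  generalize i % T.length = r at hr ⊢
  by_cases hwrap : r + m ≤ T.length
  · classical
    set S := TinfTake T hT r m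
    have hSlen : S.length = m := by simp [S, TinfTake]
    have hex : ∃ j, OccursAt T S j := ⟨r, occursAt_TinfTake T hT hwrap⟩
    have hj := Nat.find_spec hex
    have hleft : ¬OccursBefore T S (Nat.find hex) := fun ⟨_, hlt, hocc⟩ =>
      Nat.find_min hex hlt hocc
    obtain ⟨k, hk, hjk, hkj⟩ := h.exists_phraseStart_mem_of_not_occursBefore hj hleft
      (List.ne_nil_of_length_pos (by omega))
    refine ⟨k, hk, phraseStart fs k - Nat.find hex, by omega, by omega, ?_⟩
    rw [Nat.sub_sub_self hjk, ← hSlen, hj.TinfTake_eq hT]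
  · obtain ⟨k, hk, hkn⟩ := h.exists_phraseStart_eq_length_sub_one hT hsent
    refine ⟨k, hk, T.length - 1 - r, by omega, by omega, ?_⟩
    rw [hkn, Nat.sub_sub_self (by omega)]

end IsLZ77

end

/-- If the last symbol of `T` is a unique sentinel, then for any `m ≥ 1` the
number of distinct length-`m` substrings of the infinite periodic extension
`T^∞` is at most `m * z`, where `z` is the number of greedy LZ77 factors
of `T`. -/
theorem stmt6 {α : Type*} [DecidableEq α] (T : List α) (hT : T ≠ [])
    (hsent : T.count (T.getLast hT) = 1)
    (fs : List (List α)) (h : IsLZ77 T fs) (m : ℕ) (hm : 1 ≤ m) :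
    {S : List α | ∃ i : ℕ, S = TinfTake T hT i m}.ncard ≤ m * fs.length := by
  set window : Fin fs.length × Fin m → List α :=
    fun kd => TinfTake T hT (phraseStart fs kd.1 - kd.2) m
  have hcover : {S : List α | ∃ i : ℕ, S = TinfTake T hT i m} ⊆ Set.range window := by
    rintro S ⟨i, rfl⟩
    obtain ⟨k, hk, d, hd, -, hkd⟩ := h.exists_TinfTake_eq_phraseStart_sub hT hsent hm i
    exact ⟨(⟨k, hk⟩, ⟨d, hd⟩), hkd⟩
  calc {S : List α | ∃ i : ℕ, S = TinfTake T hT i m}.ncard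
      ≤ (Set.range window).ncard := Set.ncard_le_ncard hcover (Set.finite_range window)
    _ ≤ Nat.card (Fin fs.length × Fin m) := by
      rw [← Nat.card_coe_set_eq]; exact Finite.card_range_le window
    _ = m * fs.length := by simp [mul_comm]
end

section
/- Longest common substring via adjacent suffixes: let T = S₁$S₂ with $ a separator not occurring in S₁ or S₂, and let SA and ISA be the suffix array and inverse suffix array of T. If W is a longest common substring of S₁ and S₂, then there exist occurrences S₁[i₁..j₁] = W and S₂[i₂..j₂] = W such that |ISA[i₁] − ISA[|S₁|+1+i₂]| = 1, i.e., the corresponding suffixes of T are adjacent in lexicographic order. -/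
/-!
A suffix lying lexicographically between two suffixes that start with `W` starts with `W` as
well, so the suffixes of `T` beginning with `W` occupy a block of consecutive ranks. Because
`$ ∉ W`, each of them starts either at an occurrence of `W` inside `S₁` or inside `S₂`, and both
kinds occur. Walking through the block, some two consecutive ranks carry one of each kind.
-/

namespace List

variable {α : Type*}

theorem IsPrefix.of_lt_of_lt [LinearOrder α] {w a b c : List α} (ha : w <+: a) (hc : w <+: c)
    (hab : a < b) (hbc : b < c) : w <+: b := by
  induction w generalizing a b c with
  | nil => exact nil_prefix
  | cons x w ih =>
    obtain ⟨a', rfl, ha'⟩ := cons_prefix_iff.mp ha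
    obtain ⟨c', rfl, hc'⟩ := cons_prefix_iff.mp hc
    cases b with
    | nil => exact absurd hab (not_lt_nil _)
    | cons y b =>
      rw [cons_lt_cons_iff] at hab hbc
      rcases hab with hxy | ⟨rfl, hab⟩
      · rcases hbc with hyx | ⟨rfl, -⟩
        · exact absurd (hxy.trans hyx) (lt_irrefl _)
        · exact absurd hxy (lt_irrefl _)
      · rcases hbc with hyx | ⟨-, hbc⟩
        · exact absurd hyx (lt_irrefl _)
        · exact cons_prefix_cons.mpr ⟨rfl, ih ha' hc' hab hbc⟩

theorem IsPrefix.of_append_cons {w l r : List α} {x : α} (hx : x ∉ w)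
    (h : w <+: l ++ x :: r) : w <+: l := by
  induction l generalizing w with
  | nil =>
    rcases prefix_cons_iff.mp h with rfl | ⟨t, rfl, -⟩
    · exact nil_prefix
    · exact absurd mem_cons_self hx
  | cons y l ih =>
    rcases prefix_cons_iff.mp h with rfl | ⟨t, rfl, ht⟩
    · exact nil_prefix
    · exact cons_prefix_cons.mpr ⟨rfl, ih (fun h => hx (mem_cons_of_mem y h)) ht⟩

theorem IsInfix.exists_lt_length_prefix_drop {w l : List α} (hl : l ≠ []) (h : w <:+: l) :
    ∃ i < l.length, w <+: l.drop i := by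
  obtain ⟨s, t, rfl⟩ := h
  cases w with
  | nil => exact ⟨0, length_pos_iff.mpr hl, nil_prefix⟩
  | cons x w => exact ⟨s.length, by simp, by simp⟩

theorem IsPrefix.add_length_le_and_take_drop {w l : List α} {i : ℕ} (hi : i ≤ l.length)
    (h : w <+: l.drop i) : i + w.length ≤ l.length ∧ (l.drop i).take w.length = w := by
  refine ⟨?_, (prefix_iff_eq_take.mp h).symm⟩
  have := h.length_le
  rw [length_drop] at this
  omega

end List

theorem Nat.exists_adjacent_of_forall_between {P Q : ℕ → Prop} {a b : ℕ} (hab : a < b)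
    (ha : P a) (hb : Q b) (h : ∀ k, a < k → k < b → P k ∨ Q k) : ∃ k, P k ∧ Q (k + 1) := by
  induction b, hab using Nat.le_induction with
  | base => exact ⟨a, ha, hb⟩
  | succ b hab ih =>
    rcases h b hab (lt_add_one b) with hPb | hQb
    · exact ⟨b, hPb, hb⟩
    · exact ih hQb fun k hak hkb => h k hak (hkb.trans (lt_add_one b))

section SuffixRank

variable {α : Type*} [LinearOrder α] {T W : List α} {ISA : ℕ → ℕ}

theorem exists_prefix_drop_of_rank_between
    (hbij : Set.BijOn ISA (Set.Iio T.length) (Set.Iio T.length))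
    (hord : ∀ i j, i < T.length → j < T.length → ISA i < ISA j → T.drop i < T.drop j)
    {x y k : ℕ} (hx : x < T.length) (hy : y < T.length)
    (hWx : W <+: T.drop x) (hWy : W <+: T.drop y) (hxk : ISA x < k) (hky : k < ISA y) :
    ∃ p < T.length, ISA p = k ∧ W <+: T.drop p := by
  obtain ⟨p, hp, rfl⟩ := hbij.surjOn (hky.trans (hbij.mapsTo hy))
  exact ⟨p, hp, rfl, hWx.of_lt_of_lt hWy (hord x p hx hp hxk) (hord p y hp hy hky)⟩

theorem exists_adjacent_rank_of_prefix_drop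
    (hbij : Set.BijOn ISA (Set.Iio T.length) (Set.Iio T.length))
    (hord : ∀ i j, i < T.length → j < T.length → ISA i < ISA j → T.drop i < T.drop j)
    (P : ℕ → Prop) {a b : ℕ} (ha : a < T.length) (hb : b < T.length)
    (hWa : W <+: T.drop a) (hWb : W <+: T.drop b) (hPa : P a) (hPb : ¬P b) :
    ∃ i j, i < T.length ∧ j < T.length ∧ W <+: T.drop i ∧ W <+: T.drop j ∧ P i ∧ ¬P j ∧
      (ISA j = ISA i + 1 ∨ ISA i = ISA j + 1) := by
  let occursAtRank (R : ℕ → Prop) (k : ℕ) : Prop := ∃ p < T.length, ISA p = k ∧ W <+: T.drop p ∧ R p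
  have hbetween : ∀ x y k, x < T.length → y < T.length → W <+: T.drop x → W <+: T.drop y →
      ISA x < k → k < ISA y → occursAtRank P k ∨ occursAtRank (¬P ·) k := by
    intro x y k hx hy hWx hWy hxk hky
    obtain ⟨p, hp, rfl, hWp⟩ := exists_prefix_drop_of_rank_between hbij hord hx hy hWx hWy hxk hky
    by_cases hPp : P p
    · exact .inl ⟨p, hp, rfl, hWp, hPp⟩
    · exact .inr ⟨p, hp, rfl, hWp, hPp⟩
  have hne : ISA a ≠ ISA b := fun h => hPb (hbij.injOn ha hb h ▸ hPa)
  rcases hne.lt_or_gt with hlt | hgt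
  · obtain ⟨k, ⟨i, hi, rfl, hWi, hPi⟩, ⟨j, hj, hji, hWj, hPj⟩⟩ :=
      Nat.exists_adjacent_of_forall_between (P := occursAtRank P) (Q := occursAtRank (¬P ·)) hlt
        ⟨a, ha, rfl, hWa, hPa⟩ ⟨b, hb, rfl, hWb, hPb⟩
        fun k hak hkb => hbetween a b k ha hb hWa hWb hak hkb
    exact ⟨i, j, hi, hj, hWi, hWj, hPi, hPj, .inl hji⟩
  · obtain ⟨k, ⟨j, hj, rfl, hWj, hPj⟩, ⟨i, hi, hij, hWi, hPi⟩⟩ :=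
      Nat.exists_adjacent_of_forall_between (P := occursAtRank (¬P ·)) (Q := occursAtRank P) hgt
        ⟨b, hb, rfl, hWb, hPb⟩ ⟨a, ha, rfl, hWa, hPa⟩
        fun k hbk hka => (hbetween b a k hb ha hWb hWa hbk hka).symm
    exact ⟨i, j, hi, hj, hWi, hWj, hPi, hPj, .inr hij⟩

end SuffixRank

theorem stmt9_general {α : Type*} [LinearOrder α] (S1 S2 : List α) (sep : α)
    (hS2 : S2 ≠ [])
    (h1 : sep ∉ S1)
    (T : List α) (hT : T = S1 ++ [sep] ++ S2)
    (ISA : ℕ → ℕ)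
    (hbij : Set.BijOn ISA (Set.Iio T.length) (Set.Iio T.length))
    (hord : ∀ i j, i < T.length → j < T.length →
      (ISA i < ISA j ↔ T.drop i < T.drop j))
    (W : List α)
    (hW1 : W <:+: S1) (hW2 : W <:+: S2) :
    ∃ i1 i2 : ℕ,
      i1 + W.length ≤ S1.length ∧ (S1.drop i1).take W.length = W ∧
      i2 + W.length ≤ S2.length ∧ (S2.drop i2).take W.length = W ∧
      (ISA (S1.length + 1 + i2) = ISA i1 + 1 ∨
        ISA i1 = ISA (S1.length + 1 + i2) + 1) := by
  have hTlen : T.length = S1.length + 1 + S2.length := by simp [hT]; omega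
  have hdrop_right : ∀ j, T.drop (S1.length + 1 + j) = S2.drop j := fun j => by
    rw [hT, ← List.drop_length_add_append (l₁ := S1 ++ [sep]) j, List.length_append,
      List.length_singleton]
  obtain ⟨a, ha, hWa⟩ :=
    (hW1.trans (List.prefix_append S1 [sep]).isInfix).exists_lt_length_prefix_drop (by simp)
  obtain ⟨b, hb, hWb⟩ := hW2.exists_lt_length_prefix_drop hS2
  have hWaT : W <+: T.drop a := by
    rw [hT, List.drop_append_of_le_length ha.le]; exact hWa.trans (List.prefix_append _ _)
  have hWbT : W <+: T.drop (S1.length + 1 + b) := by rw [hdrop_right]; exact hWb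
  rw [List.length_append, List.length_singleton] at ha
  obtain ⟨i, j, -, hj, hWi, hWj, hiS1, hjS1, hadj⟩ :=
    exists_adjacent_rank_of_prefix_drop hbij (fun i j hi hj => (hord i j hi hj).mp)
      (· ≤ S1.length) (by omega) (by omega) hWaT hWbT (Nat.le_of_lt_succ ha) (by omega)
  obtain ⟨j, rfl⟩ : ∃ j', j = S1.length + 1 + j' := ⟨j - (S1.length + 1), by omega⟩
  have hWi' : W <+: S1.drop i := by
    rw [hT, List.append_assoc, List.drop_append_of_le_length hiS1] at hWi
    exact hWi.of_append_cons fun h => h1 (hW1.subset h)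
  rw [hdrop_right] at hWj
  obtain ⟨hi_len, hi_take⟩ := hWi'.add_length_le_and_take_drop hiS1
  obtain ⟨hj_len, hj_take⟩ := hWj.add_length_le_and_take_drop (by omega)
  exact ⟨i, j, hi_len, hi_take, hj_len, hj_take, hadj⟩

/-- Longest common substring via adjacent suffixes: let `T = S₁ ++ [$] ++ S₂`
where `$` occurs in neither `S₁` nor `S₂`, and let `ISA` be the inverse suffix
array of `T` (the rank function of suffixes in lexicographic order).  If `W`
is a longest common substring of `S₁` and `S₂`, then there are occurrences
`S₁[i₁..] = W` and `S₂[i₂..] = W` whose corresponding suffixes of `T` are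
adjacent in lexicographic order: `|ISA i₁ − ISA (|S₁| + 1 + i₂)| = 1`. -/
theorem stmt9 {α : Type*} [LinearOrder α] (S1 S2 : List α) (sep : α)
    (hS1 : S1 ≠ []) (hS2 : S2 ≠ [])
    (h1 : sep ∉ S1) (h2 : sep ∉ S2)
    (T : List α) (hT : T = S1 ++ [sep] ++ S2)
    (ISA : ℕ → ℕ)
    (hbij : Set.BijOn ISA (Set.Iio T.length) (Set.Iio T.length))
    (hord : ∀ i j, i < T.length → j < T.length →
      (ISA i < ISA j ↔ T.drop i < T.drop j))
    (W : List α)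
    (hW1 : W <:+: S1) (hW2 : W <:+: S2)
    (hWmax : ∀ W', W' <:+: S1 → W' <:+: S2 → W'.length ≤ W.length) :
    ∃ i1 i2 : ℕ,
      i1 + W.length ≤ S1.length ∧ (S1.drop i1).take W.length = W ∧
      i2 + W.length ≤ S2.length ∧ (S2.drop i2).take W.length = W ∧
      (ISA (S1.length + 1 + i2) = ISA i1 + 1 ∨
        ISA i1 = ISA (S1.length + 1 + i2) + 1) :=
  stmt9_general S1 S2 sep hS2 h1 T hT ISA hbij hord W hW1 hW2
end

section
/- The Lyndon factorization boundaries of a string T with suffix array inverse ISA are exactly the positions i ∈ [1, n] such that ISA[i] < ISA[j] for all j < i; i.e., position i starts a Lyndon factor of T if and only if the suffix T[i..n] is lexicographically smaller than every suffix T[j..n] with j < i. -/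
/-!
Write `T = w₁ w₂ ⋯ w_f` and `R_k = w_{k+1} ⋯ w_f`. If `s` is a proper nonempty suffix of a Lyndon
word `w`, then `w < s` and `w` is not a prefix of `s`, so `w ++ u < s ++ v` for all `u`, `v`: a
position strictly inside a factor is beaten by the start of that factor. Since the factors are
nonincreasing, `R_k < s ++ R_k` for every nonempty suffix `s` of `w_k` (by induction on `f - k`,
comparing `w_{k+1}` with `s`): the start of a factor beats every position of the previous factor,
hence every earlier position. Peeling off the first factor, the theorem follows by induction on
the factorization.
-/

/-- A Lyndon word: a nonempty string strictly lexicographically smaller than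
all of its proper nonempty suffixes. -/
def IsLyndon {α : Type*} [LinearOrder α] (w : List α) : Prop :=
  w ≠ [] ∧ ∀ s : List α, s ≠ [] → s ≠ w → s <:+ w → w < s

section

variable {α : Type*}

def factorStart (fs : List (List α)) (k : ℕ) : ℕ := ((fs.take k).map List.length).sum

@[simp]
theorem factorStart_zero (fs : List (List α)) : factorStart fs 0 = 0 := by
  simp [factorStart]

@[simp]
theorem factorStart_cons_succ (w : List α) (fs : List (List α)) (k : ℕ) :
    factorStart (w :: fs) (k + 1) = w.length + factorStart fs k := by
  simp [factorStart]

variable [LinearOrder α]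

theorem List.append_lt_append_of_lt_of_not_prefix {x y : List α} (h : x < y) (hxy : ¬ x <+: y)
    (u v : List α) : x ++ u < y ++ v := by
  induction h with
  | nil => exact absurd (List.nil_prefix) hxy
  | cons h ih => exact List.Lex.cons (ih fun hp => hxy (List.cons_prefix_cons.2 ⟨rfl, hp⟩))
  | rel h => exact List.Lex.rel h

namespace IsLyndon

variable {w : List α}

theorem le_of_isSuffix (hw : IsLyndon w) {s : List α} (hs : s ≠ []) (hsuf : s <:+ w) : w ≤ s := by
  rcases eq_or_ne s w with rfl | hsw
  · exact le_rfl
  · exact (hw.2 s hs hsw hsuf).le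

theorem append_lt_suffix_append (hw : IsLyndon w) {s : List α} (hs : s ≠ []) (hsw : s ≠ w)
    (hsuf : s <:+ w) (u v : List α) : w ++ u < s ++ v :=
  List.append_lt_append_of_lt_of_not_prefix (hw.2 s hs hsw hsuf)
    (fun hp => hsw (hsuf.eq_of_length (hsuf.length_le.antisymm hp.length_le))) u v

theorem append_lt_drop_append (hw : IsLyndon w) {i : ℕ} (hi0 : 0 < i) (hiw : i < w.length)
    (v : List α) : w ++ v < (w ++ v).drop i := by
  rw [List.drop_append_of_le_length hiw.le]
  refine hw.append_lt_suffix_append ?_ ?_ (List.drop_suffix i w) v v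
  · simpa using hiw
  · intro h
    have := congrArg List.length h
    simp only [List.length_drop] at this
    omega

theorem lt_suffix_append (hw : IsLyndon w) {w' v : List α} (hle : w' ≤ w)
    (hv : v < w' ++ v) (s : List α) (hs : s ≠ []) (hsuf : s <:+ w) :
    w' ++ v < s ++ (w' ++ v) := by
  by_cases hp : w' <+: s
  · obtain ⟨u, rfl⟩ := hp
    have hu : v < u ++ (w' ++ v) := by
      rcases eq_or_ne u [] with rfl | hu
      · exact hv
      have hw' : w' ≠ [] := by
        rintro rfl
        simp at hv
      have : u.length < (w' ++ u).length := by simpa using List.length_pos_iff.2 hw'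
      exact hv.trans (hw.lt_suffix_append hle hv u hu ((List.suffix_append w' u).trans hsuf))
    simpa using List.append_left_lt hu
  · have hlt : w' < s :=
      (hle.trans (hw.le_of_isSuffix hs hsuf)).lt_of_ne fun h => hp (h ▸ List.prefix_refl w')
    exact List.append_lt_append_of_lt_of_not_prefix hlt hp v (w' ++ v)
termination_by s.length

end IsLyndon

theorem flatten_lt_suffix_append_flatten {w : List α} {rest : List (List α)}
    (hL : ∀ x ∈ w :: rest, IsLyndon x) (hc : (w :: rest).IsChain fun a b => b ≤ a)
    (s : List α) (hs : s ≠ []) (hsuf : s <:+ w) :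
    rest.flatten < s ++ rest.flatten := by
  induction rest generalizing w s with
  | nil =>
    obtain ⟨a, s, rfl⟩ := List.exists_cons_of_ne_nil hs
    simp
  | cons w' rest ih =>
    have hw' : IsLyndon w' := hL w' (by simp)
    have hv := ih (fun x hx => hL x (List.mem_cons_of_mem w hx)) hc.tail w' hw'.1
      (List.suffix_refl w')
    simpa using (hL w (by simp)).lt_suffix_append (List.isChain_cons_cons.1 hc).1 hv s hs hsuf

theorem flatten_lt_drop_append_flatten {w : List α} {rest : List (List α)}
    (hL : ∀ x ∈ w :: rest, IsLyndon x) (hc : (w :: rest).IsChain fun a b => b ≤ a) {j : ℕ}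
    (hj : j < w.length) : rest.flatten < (w ++ rest.flatten).drop j := by
  rw [List.drop_append_of_le_length hj.le]
  exact flatten_lt_suffix_append_flatten hL hc _ (by simpa using hj) (List.drop_suffix j w)

theorem forall_drop_lt_drop_append_iff {w : List α} {rest : List (List α)}
    (hL : ∀ x ∈ w :: rest, IsLyndon x) (hc : (w :: rest).IsChain fun a b => b ≤ a) {i : ℕ} :
    (∀ j, j < w.length + i → rest.flatten.drop i < (w ++ rest.flatten).drop j) ↔
      ∀ j, j < i → rest.flatten.drop i < rest.flatten.drop j := by
  constructor
  · intro h j hj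
    simpa using h (w.length + j) (by omega)
  · intro h j hj
    rcases lt_or_ge j w.length with hjw | hjw
    · have hR : rest.flatten.drop i ≤ rest.flatten := by
        rcases Nat.eq_zero_or_pos i with rfl | hi0
        · simp
        · simpa using (h 0 hi0).le
      exact hR.trans_lt (flatten_lt_drop_append_flatten hL hc hjw)
    · obtain ⟨j, rfl⟩ := Nat.exists_eq_add_of_le hjw
      simpa using h j (by omega)

theorem exists_factorStart_iff_forall_drop_lt {fs : List (List α)}
    (hL : ∀ w ∈ fs, IsLyndon w) (hc : fs.IsChain fun a b => b ≤ a) {i : ℕ}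
    (hi : i < fs.flatten.length) :
    (∃ k, k < fs.length ∧ i = factorStart fs k) ↔
      ∀ j, j < i → fs.flatten.drop i < fs.flatten.drop j := by
  induction fs generalizing i with
  | nil => simp at hi
  | cons w rest ih =>
    have hw : IsLyndon w := hL w (by simp)
    have ih := @ih (fun x hx => hL x (List.mem_cons_of_mem w hx)) hc.tail
    simp only [List.length_cons, Nat.exists_lt_succ_left, factorStart_zero,
      factorStart_cons_succ, List.flatten_cons] at hi ih ⊢
    rcases lt_or_ge i w.length with hiw | hiw
    · rcases Nat.eq_zero_or_pos i with rfl | hi0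
      · simp
      refine iff_of_false (by omega) fun h => (h 0 hi0).not_gt ?_
      simpa using hw.append_lt_drop_append hi0 hiw rest.flatten
    · obtain ⟨i, rfl⟩ := Nat.exists_eq_add_of_le hiw
      have hne : w.length + i ≠ 0 := by have := List.length_pos_iff.2 hw.1; omega
      simp only [hne, false_or, Nat.add_left_cancel_iff, List.drop_length_add_append]
      rw [ih (by simpa using hi), forall_drop_lt_drop_append_iff hL hc]

end

theorem stmt14_general {α : Type*} [LinearOrder α] (T : List α)
    (fs : List (List α)) (hjoin : fs.flatten = T)
    (hLyndon : ∀ w ∈ fs, IsLyndon w)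
    (hsorted : fs.Chain' fun a b => b ≤ a)
    (ISA : ℕ → ℕ)
    (hord : ∀ i j, i < T.length → j < T.length →
      (ISA i < ISA j ↔ T.drop i < T.drop j)) :
    ∀ i, i < T.length →
      ((∃ k, k < fs.length ∧ i = ((fs.take k).map List.length).sum) ↔
        ∀ j, j < i → ISA i < ISA j) := by
  subst hjoin
  intro i hi
  exact (exists_factorStart_iff_forall_drop_lt hLyndon hsorted hi).trans
    (forall₂_congr fun j hj => (hord i j hi (hj.trans hi)).symm)

/-- The Lyndon factorization boundaries of `T` are exactly the positions `i`
whose `ISA` value is smaller than that of every earlier position: if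
`T = w₁ w₂ ⋯ w_f` is the Lyndon factorization (each `wᵢ` Lyndon and
`w₁ ≥ w₂ ≥ ⋯ ≥ w_f`), `T` ends in a unique smallest sentinel, and `ISA` ranks
the suffixes of `T` lexicographically, then a position `i` starts a Lyndon
factor of `T` iff `ISA i < ISA j` for all `j < i`, i.e. iff the suffix at `i`
is lexicographically smaller than every earlier suffix. -/
theorem stmt14 {α : Type*} [LinearOrder α] (T : List α) (hT : T ≠ [])
    (hsent : ∀ j : Fin T.length, (j : ℕ) + 1 < T.length →
      T.getLast hT < T.get j)
    (fs : List (List α)) (hjoin : fs.flatten = T)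
    (hLyndon : ∀ w ∈ fs, IsLyndon w)
    (hsorted : fs.Chain' fun a b => b ≤ a)
    (ISA : ℕ → ℕ)
    (hord : ∀ i j, i < T.length → j < T.length →
      (ISA i < ISA j ↔ T.drop i < T.drop j)) :
    ∀ i, i < T.length →
      ((∃ k, k < fs.length ∧ i = ((fs.take k).map List.length).sum) ↔
        ∀ j, j < i → ISA i < ISA j) :=
  stmt14_general T fs hjoin hLyndon hsorted ISA hord
end
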